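/- If the eigenvector constraint x_i ≠ 0 for all i and (Bx)_k ≠ 0 for all k is satisfied, then the solution sets satisfy S₁ ⊆ S₂ ⊆ S₀: every solution of Form 1 (N₁(x)x = λR(x)x with both constraints, N₁(x) = B^T D^w diag(|Bx|)^{p−2}B) is a solution of Form 2 (N₂(x)x = λR(x)x with only x_i ≠ 0, N₂(x) = B^T D^w diag(|Bx|)^{p−1} P(x) diag(|x|)^{−1}), and every solution of Form 2 solves the original problem B^T D^w Φ_p(Bx) = λ Φ_p(x). -/
import Mathlib

open Matrix

lemma sign_mul_abs' (t : ℝ) : Real.sign t * |t| = t := by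
  rcases lt_trichotomy t 0 with h | h | h
  · rw [Real.sign_of_neg h, abs_of_neg h]; ring
  · simp [h]
  · rw [Real.sign_of_pos h, abs_of_pos h]; ring

lemma rpow_sign_key (t q : ℝ) (ht : t ≠ 0) :
    |t| ^ q * t = |t| ^ (q + 1) * Real.sign t := by
  rw [Real.rpow_add (abs_pos.mpr ht), Real.rpow_one, mul_assoc,
    mul_comm |t| (Real.sign t), sign_mul_abs']

lemma inv_abs_mul_self (t : ℝ) (ht : t ≠ 0) : |t|⁻¹ * t = Real.sign t := by
  rcases lt_trichotomy t 0 with h | h | h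
  · rw [Real.sign_of_neg h, abs_of_neg h]
    field_simp
  · exact absurd h ht
  · rw [Real.sign_of_pos h, abs_of_pos h]
    field_simp

lemma sign_sub_of_abs_lt {a b : ℝ} (h : |a| < |b|) :
    Real.sign (b - a) = Real.sign b := by
  rcases lt_trichotomy b 0 with hb | hb | hb
  · have : b - a < 0 := by
      have := neg_lt_of_abs_lt h
      rw [abs_of_neg hb] at this
      linarith
    rw [Real.sign_of_neg this, Real.sign_of_neg hb]
  · simp [hb] at h; linarith [abs_nonneg a]
  · have : 0 < b - a := by
      have := lt_of_abs_lt h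
      rw [abs_of_pos hb] at this
      linarith
    rw [Real.sign_of_pos this, Real.sign_of_pos hb]

theorem solution_set_inclusions (n m : ℕ) (p : ℝ) (hp : 1 < p)
    (k₁ k₂ : Fin m → Fin n)
    (B : Matrix (Fin m) (Fin n) ℝ)
    (hB : ∀ k i, B k i = (if i = k₂ k then (1 : ℝ) else 0) - (if i = k₁ k then 1 else 0))
    (Dw : Matrix (Fin m) (Fin m) ℝ) (d : Fin m → ℝ) (hDw : Dw = Matrix.diagonal d)
    (P : (Fin n → ℝ) → Matrix (Fin m) (Fin n) ℝ)
    (hP : ∀ x k i, P x k i =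
      if x (k₁ k) = x (k₂ k) then B k i
      else if (x (k₁ k) = -x (k₂ k)) ∨ |x (k₁ k)| < |x (k₂ k)| then
        (if i = k₂ k then 1 else 0)
      else if |x (k₁ k)| > |x (k₂ k)| then (if i = k₁ k then -1 else 0)
      else 0)
    (N₁ N₂ R : (Fin n → ℝ) → Matrix (Fin n) (Fin n) ℝ)
    (hN₁ : ∀ x, N₁ x = Bᵀ * Dw * Matrix.diagonal (fun k => |B.mulVec x k| ^ (p - 2)) * B)
    (hN₂ : ∀ x, N₂ x = Bᵀ * Dw * Matrix.diagonal (fun k => |B.mulVec x k| ^ (p - 1)) *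
      P x * Matrix.diagonal (fun i => (|x i|)⁻¹))
    (hR : ∀ x, R x = Matrix.diagonal (fun i => |x i| ^ (p - 2))) :
    (∀ (x : Fin n → ℝ) (lam : ℝ), (∀ i, x i ≠ 0) → (∀ k, B.mulVec x k ≠ 0) →
      (N₁ x).mulVec x = lam • (R x).mulVec x →
      (N₂ x).mulVec x = lam • (R x).mulVec x) ∧
    (∀ (x : Fin n → ℝ) (lam : ℝ), (∀ i, x i ≠ 0) →
      (N₂ x).mulVec x = lam • (R x).mulVec x →
      (Bᵀ * Dw).mulVec
          (fun k => |B.mulVec x k| ^ (p - 1) * Real.sign (B.mulVec x k)) =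
        fun i => lam * (|x i| ^ (p - 1) * Real.sign (x i))) := by
  -- key computation: N₂ x *ᵥ x = (Bᵀ * Dw) *ᵥ Φ_p(Bx)
  have key : ∀ (x : Fin n → ℝ), (∀ i, x i ≠ 0) →
      (N₂ x).mulVec x = (Bᵀ * Dw).mulVec
        (fun k => |B.mulVec x k| ^ (p - 1) * Real.sign (B.mulVec x k)) := by
    intro x hx
    have h3 : (Matrix.diagonal fun k => |B.mulVec x k| ^ (p - 1)).mulVec
        (fun k => Real.sign (B.mulVec x k))
        = fun k => |B.mulVec x k| ^ (p - 1) * Real.sign (B.mulVec x k) := by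
      ext k
      rw [Matrix.mulVec_diagonal]
    -- diag(|x|⁻¹) *ᵥ x = sign ∘ x
    have h1 : (Matrix.diagonal fun i => (|x i|)⁻¹).mulVec x = fun i => Real.sign (x i) := by
      ext i
      rw [Matrix.mulVec_diagonal]
      exact inv_abs_mul_self _ (hx i)
    -- P x *ᵥ sign∘x = sign ∘ Bx
    have h2 : (P x).mulVec (fun i => Real.sign (x i)) = fun k => Real.sign (B.mulVec x k) := by
      ext k
      have hBx : B.mulVec x k = x (k₂ k) - x (k₁ k) := by
        simp only [Matrix.mulVec, dotProduct, hB, sub_mul, one_mul, zero_mul, ite_mul,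
          Finset.sum_sub_distrib, Finset.sum_ite_eq', Finset.mem_univ, if_true]
      have hL : (P x).mulVec (fun i => Real.sign (x i)) k
          = ∑ i, P x k i * Real.sign (x i) := rfl
      rw [hL, hBx]
      by_cases hab : x (k₁ k) = x (k₂ k)
      · simp only [hP, if_pos hab, hB, sub_mul, one_mul, zero_mul, ite_mul,
          Finset.sum_sub_distrib, Finset.sum_ite_eq', Finset.mem_univ, if_true]
        rw [hab, sub_self, sub_self, Real.sign_zero]
      · simp only [hP, if_neg hab]
        by_cases hc : (x (k₁ k) = -x (k₂ k)) ∨ |x (k₁ k)| < |x (k₂ k)|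
        · simp only [if_pos hc, ite_mul, one_mul, zero_mul, Finset.sum_ite_eq',
            Finset.mem_univ, if_true]
          rcases hc with hc | hc
          · rw [show x (k₂ k) - x (k₁ k) = 2 * x (k₂ k) by rw [hc]; ring]
            rcases lt_trichotomy (x (k₂ k)) 0 with h | h | h
            · rw [Real.sign_of_neg h, Real.sign_of_neg (by linarith)]
            · simp [h]
            · rw [Real.sign_of_pos h, Real.sign_of_pos (by linarith)]
          · exact (sign_sub_of_abs_lt hc).symm
        · push_neg at hc
          have hd : |x (k₂ k)| < |x (k₁ k)| := by
            rcases lt_trichotomy |x (k₁ k)| |x (k₂ k)| with h | h | h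
            · linarith [hc.2]
            · rcases abs_eq_abs.mp h with h' | h'
              · exact absurd h' hab
              · exact absurd h' hc.1
            · exact h
          simp only [if_neg (by push_neg; exact hc :
              ¬(x (k₁ k) = -x (k₂ k) ∨ |x (k₁ k)| < |x (k₂ k)|)),
            if_pos (show |x (k₁ k)| > |x (k₂ k)| from hd), ite_mul, neg_mul, one_mul,
            zero_mul, Finset.sum_ite_eq', Finset.mem_univ, if_true]
          rw [show x (k₂ k) - x (k₁ k) = -(x (k₁ k) - x (k₂ k)) by ring,
            Real.sign_neg, sign_sub_of_abs_lt hd]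
    rw [hN₂, ← Matrix.mulVec_mulVec, ← Matrix.mulVec_mulVec, ← Matrix.mulVec_mulVec,
      h1, h2, h3]
  refine ⟨?_, ?_⟩
  · intro x lam hx hBx hform1
    rw [key x hx]
    rw [hN₁, ← Matrix.mulVec_mulVec, ← Matrix.mulVec_mulVec] at hform1
    have heq : (Matrix.diagonal fun k => |B.mulVec x k| ^ (p - 2)).mulVec (B.mulVec x)
        = fun k => |B.mulVec x k| ^ (p - 1) * Real.sign (B.mulVec x k) := by
      ext k
      rw [Matrix.mulVec_diagonal]
      have := rpow_sign_key (B.mulVec x k) (p - 2) (hBx k)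
      rw [show p - 2 + 1 = p - 1 by ring] at this
      exact this
    rw [heq] at hform1
    exact hform1
  · intro x lam hx hform2
    rw [← key x hx, hform2, hR]
    ext i
    simp only [Pi.smul_apply, smul_eq_mul, Matrix.mulVec_diagonal]
    congr 1
    have := rpow_sign_key (x i) (p - 2) (hx i)
    rw [show p - 2 + 1 = p - 1 by ring] at this
    exact this
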